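/- Let T > 0 and α ∈ (0,1). There exist constants C = C(α,m,n,T) > 0 and m₀ = m₀(α,m,n) > 0 such that for every function u ∈ C^{0,2+α}_{WF}([0,T]×S̄_{n,m}), every ε ∈ (0,1), and every i ∈ {1,…,n}: ‖u_{x_i}‖_{C([0,T]×S̄_{n,m})} ≤ ε ‖u‖_{C^{0,2+α}_{WF}([0,T]×S̄_{n,m})} + C ε^{−m₀} ‖u‖_{C([0,T]×S̄_{n,m})}. -/

import Mathlib

open scoped ENNReal BigOperators
open Set

noncomputable section

namespace Kimura

/-- Spatial variable space `ℝ^n × ℝ^m`. -/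
abbrev Z (n m : ℕ) : Type := (Fin n → ℝ) × (Fin m → ℝ)

/-- Time–space variable space. -/
abbrev E (n m : ℕ) : Type := ℝ × Z n m

variable {n m : ℕ}

/-- The open orthant `S_{n,m} = (0,∞)^n × ℝ^m`. -/
def Sopen (n m : ℕ) : Set (Z n m) := {z | ∀ i, 0 < z.1 i}

/-- The closed orthant `S̄_{n,m} = [0,∞)^n × ℝ^m`. -/
def Sbar (n m : ℕ) : Set (Z n m) := {z | ∀ i, 0 ≤ z.1 i}

/-- The function `F` used to define the WF distance. -/
def Fwf (s : ℝ) : ℝ := if s ≤ 1 then 2 * Real.sqrt s else s + 1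

/-- The spatial WF distance `ρ₀`. -/
def rho0 (z0 z : Z n m) : ℝ :=
  (⨆ i : Fin n, |Fwf (z0.1 i) - Fwf (z.1 i)|) + ⨆ l : Fin m, |z0.2 l - z.2 l|

/-- The parabolic WF distance `ρ`. -/
def rho (P0 P : E n m) : ℝ := rho0 P0.2 P.2 + Real.sqrt |P0.1 - P.1|

/-- The parabolic cylinder `J × D`. -/
def QT (J : Set ℝ) (D : Set (Z n m)) : Set (E n m) := J ×ˢ D

/-- Supremum norm on `J × D` (valued in `ℝ≥0∞`). -/
def supN (J : Set ℝ) (D : Set (Z n m)) (u : E n m → ℝ) : ℝ≥0∞ :=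
  ⨆ P ∈ QT J D, ENNReal.ofReal |u P|

/-- The WF Hölder seminorm of exponent `a` on `J × D`. -/
def holderSemi (a : ℝ) (J : Set ℝ) (D : Set (Z n m)) (u : E n m → ℝ) : ℝ≥0∞ :=
  ⨆ P1 ∈ QT J D, ⨆ P2 ∈ QT J D, ⨆ _ : P1 ≠ P2,
    ENNReal.ofReal (|u P1 - u P2| / rho P1 P2 ^ a)

/-- The `C^{0,α}_{WF}` norm on `J × D`. -/
def holderN (a : ℝ) (J : Set ℝ) (D : Set (Z n m)) (u : E n m → ℝ) : ℝ≥0∞ :=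
  supN J D u + holderSemi a J D u

/-- Time direction. -/
def eT (n m : ℕ) : E n m := (1, 0)

/-- `x_i` direction. -/
def eX (n m : ℕ) (i : Fin n) : E n m := (0, (Pi.single i 1, 0))

/-- `y_l` direction. -/
def eY (n m : ℕ) (l : Fin m) : E n m := (0, (0, Pi.single l 1))

/-- Partial (line) derivative along the direction `v`. -/
def dl (v : E n m) (u : E n m → ℝ) : E n m → ℝ := fun P => lineDeriv ℝ u P v

/-- Iterated partial derivative `D_t^τ D_x^{ζx} D_y^{ζy}`. -/
def multiD (τ : ℕ) (ζx : Fin n → ℕ) (ζy : Fin m → ℕ) (u : E n m → ℝ) : E n m → ℝ :=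
  (dl (eT n m))^[τ]
    (((List.ofFn fun i : Fin n => (dl (eX n m i))^[ζx i]).foldr (· ∘ ·) id)
      (((List.ofFn fun l : Fin m => (dl (eY n m l))^[ζy l]).foldr (· ∘ ·) id) u))

/-- A parabolic multi-index `(τ, ζ)`. -/
abbrev MIdx (n m : ℕ) : Type := ℕ × (Fin n → ℕ) × (Fin m → ℕ)

/-- Parabolic weight `2τ + |ζ|` of a multi-index. -/
def MIdx.wt (p : MIdx n m) : ℕ := 2 * p.1 + ((∑ i, p.2.1 i) + ∑ l, p.2.2 l)

/-- Iterated derivative associated with a multi-index. -/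
def multiDP (p : MIdx n m) (u : E n m → ℝ) : E n m → ℝ := multiD p.1 p.2.1 p.2.2 u

/-- Multi-indices of parabolic weight at most `k`. -/
def Idx (n m k : ℕ) : Type := {p : MIdx n m // MIdx.wt p ≤ k}

/-- The `C^{k,α}_{WF}` norm on `J × D`. -/
def CkN (k : ℕ) (a : ℝ) (J : Set ℝ) (D : Set (Z n m)) (u : E n m → ℝ) : ℝ≥0∞ :=
  ∑' p : Idx n m k, holderN a J D (multiDP p.1 u)

/-- The region `M_I`. -/
def MI (n m : ℕ) (I : Finset (Fin n)) : Set (Z n m) :=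
  {z | (∀ i ∈ I, z.1 i ∈ Set.Ioo (0:ℝ) 1) ∧ ∀ j ∉ I, 1 < z.1 j}

/-- The region `M'_I`. -/
def MI' (n m : ℕ) (I : Finset (Fin n)) : Set (Z n m) :=
  {z | (∀ i ∈ I, z.1 i ∈ Set.Ioo (0:ℝ) 1) ∧ ∀ j ∉ I, 1 / 2 < z.1 j}

/-- The region `M''_I`. -/
def MI'' (n m : ℕ) (I : Finset (Fin n)) : Set (Z n m) :=
  {z | (∀ i ∈ I, z.1 i ∈ Set.Ioo (0:ℝ) 2) ∧ ∀ j ∉ I, 1 / 4 < z.1 j}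

/-- The `C^{0,2+α}_{WF}` norm on a piece `D ⊆ M̄_I`. -/
def pieceN (I : Finset (Fin n)) (a : ℝ) (J : Set ℝ) (D : Set (Z n m)) (u : E n m → ℝ) :
    ℝ≥0∞ :=
  CkN 1 a J D u + holderN a J D (dl (eT n m) u)
  + (∑ i ∈ I, ∑ j ∈ I, holderN a J D
      fun P => Real.sqrt (P.2.1 i * P.2.1 j) * dl (eX n m i) (dl (eX n m j) u) P)
  + (∑ i ∈ I, ∑ j ∈ Iᶜ, holderN a J D
      fun P => Real.sqrt (P.2.1 i) * dl (eX n m i) (dl (eX n m j) u) P)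
  + (∑ i ∈ I, ∑ l : Fin m, holderN a J D
      fun P => Real.sqrt (P.2.1 i) * dl (eX n m i) (dl (eY n m l) u) P)
  + (∑ i ∈ Iᶜ, ∑ j ∈ Iᶜ, holderN a J D (dl (eX n m i) (dl (eX n m j) u)))
  + (∑ i ∈ Iᶜ, ∑ l : Fin m, holderN a J D (dl (eX n m i) (dl (eY n m l) u)))
  + ∑ l : Fin m, ∑ q : Fin m, holderN a J D (dl (eY n m l) (dl (eY n m q) u))

/-- The `C^{0,2+α}_{WF}` norm on `J × D` for an arbitrary domain `D`. -/
def C2N (a : ℝ) (J : Set ℝ) (D : Set (Z n m)) (u : E n m → ℝ) : ℝ≥0∞ :=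
  ∑ I : Finset (Fin n), pieceN I a J (D ∩ closure (MI n m I)) u

/-- The `C^{k,2+α}_{WF}` norm on `J × D`. -/
def Ck2N (k : ℕ) (a : ℝ) (J : Set ℝ) (D : Set (Z n m)) (u : E n m → ℝ) : ℝ≥0∞ :=
  ∑' p : Idx n m k, C2N a J D (multiDP p.1 u)

/-- Time-independent extension of a spatial function. -/
def timeExt (f : Z n m → ℝ) : E n m → ℝ := fun P => f P.2

/-- The elliptic `C^{k,α}_{WF}` norm on `D`. -/
def eCkN (k : ℕ) (a : ℝ) (D : Set (Z n m)) (f : Z n m → ℝ) : ℝ≥0∞ :=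
  CkN k a (Set.Icc 0 0) D (timeExt f)

/-- The elliptic `C^{k,2+α}_{WF}` norm on `D`. -/
def eCk2N (k : ℕ) (a : ℝ) (D : Set (Z n m)) (f : Z n m → ℝ) : ℝ≥0∞ :=
  Ck2N k a (Set.Icc 0 0) D (timeExt f)

/-- Supremum norm of a spatial function on `D`. -/
def supNZ (D : Set (Z n m)) (f : Z n m → ℝ) : ℝ≥0∞ := ⨆ z ∈ D, ENNReal.ofReal |f z|

/-- Membership in the space `C^{k,α}_{WF}(J × D)`. -/
def MemCk (k : ℕ) (a : ℝ) (J : Set ℝ) (D : Set (Z n m)) (u : E n m → ℝ) : Prop :=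
  CkN k a J D u ≠ ⊤ ∧ ∀ p : Idx n m k, ContinuousOn (multiDP p.1 u) (QT J D)

/-- Membership in the space `C^{k,2+α}_{WF}(J × D)`. -/
def MemCk2 (k : ℕ) (a : ℝ) (J : Set ℝ) (D : Set (Z n m)) (u : E n m → ℝ) : Prop :=
  Ck2N k a J D u ≠ ⊤
  ∧ (∀ p : Idx n m (k + 1), ContinuousOn (multiDP p.1 u) (QT J D))
  ∧ (∀ p : Idx n m k, ContinuousOn (dl (eT n m) (multiDP p.1 u)) (QT J D))
  ∧ (∀ p : Idx n m (k + 2), ContinuousOn (multiDP p.1 u) (QT J (D ∩ Sopen n m)))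

/-- Membership in the elliptic space `C^{k,α}_{WF}(D)`. -/
def MemECk (k : ℕ) (a : ℝ) (D : Set (Z n m)) (f : Z n m → ℝ) : Prop :=
  MemCk k a (Set.Icc 0 0) D (timeExt f)

/-- Membership in the elliptic space `C^{k,2+α}_{WF}(D)`. -/
def MemECk2 (k : ℕ) (a : ℝ) (D : Set (Z n m)) (f : Z n m → ℝ) : Prop :=
  MemCk2 k a (Set.Icc 0 0) D (timeExt f)

/-- Coefficients of a generalized Kimura operator. -/
structure Coeffs (n m : ℕ) where
  a : Fin n → Z n m → ℝ
  tA : Fin n → Fin n → Z n m → ℝ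
  b : Fin n → Z n m → ℝ
  c : Fin n → Fin m → Z n m → ℝ
  d : Fin m → Fin m → Z n m → ℝ
  e : Fin m → Z n m → ℝ

/-- The generalized Kimura operator `L`. -/
def Lop (co : Coeffs n m) (u : E n m → ℝ) : E n m → ℝ := fun P =>
  (∑ i, (P.2.1 i * co.a i P.2 * dl (eX n m i) (dl (eX n m i) u) P
        + co.b i P.2 * dl (eX n m i) u P))
  + (∑ i, ∑ j, P.2.1 i * P.2.1 j * co.tA i j P.2 * dl (eX n m i) (dl (eX n m j) u) P)
  + (∑ i, ∑ l, P.2.1 i * co.c i l P.2 * dl (eX n m i) (dl (eY n m l) u) P)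
  + (∑ q, ∑ l, co.d q l P.2 * dl (eY n m q) (dl (eY n m l) u) P)
  + ∑ l, co.e l P.2 * dl (eY n m l) u P

/-- Strict ellipticity (condition (1) of the Assumption). -/
def Ellipt (δ : ℝ) (co : Coeffs n m) : Prop :=
  ∀ I : Finset (Fin n), ∀ z ∈ closure (MI n m I), ∀ ξ : Fin n → ℝ, ∀ η : Fin m → ℝ,
    δ * ((∑ i, ξ i ^ 2) + ∑ l, η l ^ 2) ≤
      (∑ i ∈ I, co.a i z * ξ i ^ 2) + (∑ i ∈ Iᶜ, z.1 i * co.a i z * ξ i ^ 2)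
      + (∑ i ∈ I, ∑ j ∈ I, co.tA i j z * ξ i * ξ j)
      + (∑ i ∈ I, ∑ j ∈ Iᶜ, z.1 j * (co.tA i j z + co.tA j i z) * ξ i * ξ j)
      + (∑ i ∈ Iᶜ, ∑ j ∈ Iᶜ, z.1 i * z.1 j * co.tA i j z * ξ i * ξ j)
      + (∑ i ∈ I, ∑ l, co.c i l z * ξ i * η l)
      + (∑ i ∈ Iᶜ, ∑ l, z.1 i * co.c i l z * ξ i * η l)
      + ∑ q, ∑ l, co.d q l z * η q * η l

/-- Hölder continuity of the coefficients (condition (2) of the Assumption). -/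
def HolderBd (k : ℕ) (a K : ℝ) (co : Coeffs n m) : Prop :=
  ∀ I : Finset (Fin n),
    (∑ i ∈ I, eCkN k a (closure (MI n m I)) (co.a i))
    + (∑ i ∈ Iᶜ, eCkN k a (closure (MI n m I)) fun z => z.1 i * co.a i z)
    + (∑ i ∈ I, ∑ j ∈ I, eCkN k a (closure (MI n m I)) (co.tA i j))
    + (∑ i ∈ I, ∑ j ∈ Iᶜ,
        (eCkN k a (closure (MI n m I)) (fun z => z.1 j * co.tA i j z)
         + eCkN k a (closure (MI n m I)) fun z => z.1 j * co.tA j i z))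
    + (∑ i ∈ Iᶜ, ∑ j ∈ Iᶜ, eCkN k a (closure (MI n m I)) fun z => z.1 i * z.1 j * co.tA i j z)
    + (∑ i ∈ I, ∑ l, eCkN k a (closure (MI n m I)) (co.c i l))
    + (∑ i ∈ Iᶜ, ∑ l, eCkN k a (closure (MI n m I)) fun z => z.1 i * co.c i l z)
    + (∑ q, ∑ l, eCkN k a (closure (MI n m I)) (co.d q l))
    + (∑ i, eCkN k a (closure (MI n m I)) (co.b i))
    + (∑ l, eCkN k a (closure (MI n m I)) (co.e l))
    ≤ ENNReal.ofReal K

/-- Nonnegativity of the drift (condition (3) of the Assumption). -/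
def NonnegDrift (co : Coeffs n m) : Prop :=
  ∀ i, ∀ z ∈ Sbar n m, z.1 i = 0 → 0 ≤ co.b i z

/-- The full coefficient Assumption of order `k`, exponent `a`, constants `δ`, `K`. -/
def Assump (k : ℕ) (a δ K : ℝ) (co : Coeffs n m) : Prop :=
  Ellipt δ co ∧ HolderBd k a K co ∧ NonnegDrift co

/-- The Euclidean ball of radius `r` about `z0`, relative to `S_{n,m}`. -/
def ball (z0 : Z n m) (r : ℝ) : Set (Z n m) :=
  {z ∈ Sopen n m |
    Real.sqrt ((∑ i, (z.1 i - z0.1 i) ^ 2) + ∑ l, (z.2 l - z0.2 l) ^ 2) < r}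

/-- A function all of whose iterated derivatives are continuous and bounded on `J × D`. -/
def SmoothBdd (J : Set ℝ) (D : Set (Z n m)) (g : E n m → ℝ) : Prop :=
  ∀ p : MIdx n m,
    ContinuousOn (multiDP p g) (QT J D) ∧ ∃ M : ℝ, ∀ P ∈ QT J D, |multiDP p g P| ≤ M

/-- Bounded continuous function on a set. -/
def BCOn {X : Type*} [TopologicalSpace X] (g : X → ℝ) (D : Set X) : Prop :=
  ContinuousOn g D ∧ ∃ M : ℝ, ∀ x ∈ D, |g x| ≤ M

/-! At a point `P = (t, z)` work in the piece `M̄_I`, `I = {k | z_k ≤ 1}`, on which the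
Hölder seminorm of `u_{x_i}` is one of the terms of the `C^{0,2+α}_{WF}` norm. A segment of
length `h` through `P` in the `x_i` direction stays in that piece, and along it `ρ ≤ 2√h`. By the
mean value theorem `|u_{x_i}| ≤ 2‖u‖_C / h` somewhere on the segment, so
`|u_{x_i}(P)| ≤ ‖u‖_{C^{0,2+α}_{WF}} (2√h)^α + 2‖u‖_C / h`; take `h = ε^{2/α} / 4`. -/

lemma abs_sqrt_sub_sqrt_le {x y : ℝ} (hx : 0 ≤ x) (hy : 0 ≤ y) : |√x - √y| ≤ √|x - y| := by
  wlog hyx : y ≤ x generalizing x y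
  · rw [abs_sub_comm, abs_sub_comm x]
    exact this hy hx (le_of_not_ge hyx)
  have hsub : √x ≤ √(x - y) + √y := Real.sqrt_le_iff.2 ⟨by positivity, by
    nlinarith [Real.sq_sqrt (sub_nonneg.2 hyx), Real.sq_sqrt hy,
      mul_nonneg (Real.sqrt_nonneg (x - y)) (Real.sqrt_nonneg y)]⟩
  rw [abs_of_nonneg (sub_nonneg.2 (Real.sqrt_le_sqrt hyx)), abs_of_nonneg (sub_nonneg.2 hyx)]
  linarith

lemma Fwf_of_le_one {s : ℝ} (hs : s ≤ 1) : Fwf s = 2 * √s := if_pos hs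

lemma Fwf_of_one_le {s : ℝ} (hs : 1 ≤ s) : Fwf s = s + 1 := by
  rcases hs.eq_or_lt with rfl | hs
  · norm_num [Fwf]
  · exact if_neg hs.not_ge

lemma strictMonoOn_Fwf : StrictMonoOn Fwf (Ici 0) := by
  intro p (hp : 0 ≤ p) q _ hpq
  rcases le_or_gt q 1 with hq | hq
  · rw [Fwf_of_le_one (hpq.le.trans hq), Fwf_of_le_one hq]
    linarith [Real.sqrt_lt_sqrt hp hpq]
  rcases le_or_gt p 1 with hp1 | hp1
  · rw [Fwf_of_le_one hp1, Fwf_of_one_le hq.le]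
    linarith [Real.sqrt_le_one.2 hp1]
  · rw [Fwf_of_one_le hp1.le, Fwf_of_one_le hq.le]
    linarith

/-- `y` lies in the same piece `[0, 1]` or `[1, ∞)` of the definition of `Fwf` as `x`. -/
def SameSide (x y : ℝ) : Prop := (x ≤ 1 → y ∈ Icc 0 1) ∧ (1 < x → 1 ≤ y)

lemma sameSide_self {x : ℝ} (hx : 0 ≤ x) : SameSide x x :=
  ⟨fun h => ⟨hx, h⟩, le_of_lt⟩

lemma SameSide.nonneg {x y : ℝ} (h : SameSide x y) : 0 ≤ y := by
  rcases le_or_gt x 1 with hx1 | hx1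
  exacts [(h.1 hx1).1, zero_le_one.trans (h.2 hx1)]

lemma abs_Fwf_sub_le {p q h : ℝ} (hp : 0 ≤ p) (hpq : SameSide p q) (hh : h ≤ 1)
    (hdist : |p - q| ≤ h) : |Fwf p - Fwf q| ≤ 2 * √h := by
  rcases le_or_gt p 1 with hp1 | hp1
  · obtain ⟨hq0, hq1⟩ := hpq.1 hp1
    rw [Fwf_of_le_one hp1, Fwf_of_le_one hq1, ← mul_sub, abs_mul, abs_two]
    gcongr
    exact (abs_sqrt_sub_sqrt_le hp hq0).trans (Real.sqrt_le_sqrt hdist)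
  · have hq := hpq.2 hp1
    have hh0 : 0 ≤ h := (abs_nonneg _).trans hdist
    have h_le_sqrt : h ≤ √h := Real.le_sqrt_of_sq_le (by nlinarith)
    rw [Fwf_of_one_le hp1.le, Fwf_of_one_le hq, add_sub_add_right_eq_sub]
    linarith [Real.sqrt_nonneg h]

lemma exists_Icc_sameSide {x h : ℝ} (hx : 0 ≤ x) (hh0 : 0 ≤ h) (hh : h ≤ 1 / 2) :
    ∃ c ∈ Icc (-h) 0, ∀ s ∈ Icc c (c + h), SameSide x (x + s) := by
  rcases le_or_gt x (1 / 2) with hx1 | hx1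
  · exact ⟨0, ⟨by linarith, le_rfl⟩, fun s hs =>
      ⟨fun _ => ⟨by linarith [hs.1], by linarith [hs.2]⟩, fun _ => by linarith⟩⟩
  rcases le_or_gt x 1 with hx2 | hx2
  · exact ⟨-h, ⟨le_rfl, by linarith⟩, fun s hs =>
      ⟨fun _ => ⟨by linarith [hs.1], by linarith [hs.2]⟩, fun _ => by linarith⟩⟩
  · exact ⟨0, ⟨by linarith, le_rfl⟩, fun s hs =>
      ⟨fun _ => by linarith, fun _ => by linarith [hs.1]⟩⟩

lemma closure_MI (I : Finset (Fin n)) :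
    closure (MI n m I) = {z | (∀ k ∈ I, z.1 k ∈ Icc 0 1) ∧ ∀ k ∉ I, 1 ≤ z.1 k} := by
  have hMI : MI n m I = Prod.fst ⁻¹' univ.pi fun k => if k ∈ I then Ioo 0 1 else Ioi 1 := by
    ext z
    simp only [MI, mem_ofPred_eq, mem_preimage, mem_univ_pi]
    refine ⟨fun h k => ?_, fun h => ⟨fun k hk => ?_, fun k hk => ?_⟩⟩
    · split_ifs with hk
      exacts [h.1 k hk, h.2 k hk]
    · simpa [hk] using h k
    · simpa [hk] using h k
  rw [hMI, ← isOpenMap_fst.preimage_closure_eq_closure_preimage continuous_fst, closure_pi_set]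
  ext z
  simp only [mem_preimage, mem_univ_pi, mem_ofPred_eq, apply_ite closure,
    closure_Ioo zero_ne_one, closure_Ioi]
  refine ⟨fun h => ⟨fun k hk => ?_, fun k hk => ?_⟩, fun h k => ?_⟩
  · simpa [hk] using h k
  · simpa [hk] using h k
  · split_ifs with hk
    exacts [h.1 k hk, h.2 k hk]

lemma mem_Sbar_inter_closure_MI {z w : Z n m} (hw : ∀ k, SameSide (z.1 k) (w.1 k)) :
    w ∈ Sbar n m ∩ closure (MI n m (Finset.univ.filter fun k => z.1 k ≤ 1)) := by
  rw [closure_MI]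
  refine ⟨fun k => ?_, fun k hk => (hw k).1 (by simpa using hk),
    fun k hk => (hw k).2 (by simpa using hk)⟩
  rcases le_or_gt (z.1 k) 1 with hk | hk
  exacts [((hw k).1 hk).1, zero_le_one.trans ((hw k).2 hk)]

lemma add_smul_eX (P : E n m) (i : Fin n) (s : ℝ) :
    P + s • eX n m i = (P.1, (P.2.1 + Pi.single i s, P.2.2)) := by
  ext <;> simp [eX, Pi.single_apply]

lemma add_smul_eX_mem {J : Set ℝ} {P : E n m} (hP : P ∈ QT J (Sbar n m)) {i : Fin n} {s : ℝ}
    (hs : SameSide (P.2.1 i) (P.2.1 i + s)) :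
    P + s • eX n m i ∈
      QT J (Sbar n m ∩ closure (MI n m (Finset.univ.filter fun k => P.2.1 k ≤ 1))) := by
  rw [add_smul_eX]
  refine ⟨hP.1, mem_Sbar_inter_closure_MI fun k => ?_⟩
  rcases eq_or_ne k i with rfl | hk
  · simpa using hs
  · simpa [Pi.single_eq_of_ne hk] using sameSide_self (hP.2 k)

lemma rho_add_smul_eX (P : E n m) (i : Fin n) (s : ℝ) :
    rho P (P + s • eX n m i) = |Fwf (P.2.1 i) - Fwf (P.2.1 i + s)| := by
  rw [add_smul_eX]
  simp only [rho, rho0, sub_self, abs_zero, Real.sqrt_zero, add_zero, Real.iSup_const_zero]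
  refine le_antisymm (Real.iSup_le (fun k => ?_) (abs_nonneg _)) ?_
  · rcases eq_or_ne k i with rfl | hk
    · simp
    · simp [Pi.single_eq_of_ne hk]
  · simpa using le_ciSup (Set.finite_range fun k =>
      |Fwf (P.2.1 k) - Fwf (P.2.1 k + Pi.single (M := fun _ => ℝ) i s k)|).bddAbove i

lemma lineDeriv_add_smul {F : Type*} [NormedAddCommGroup F] [NormedSpace ℝ F]
    (f : F → ℝ) (x v : F) (s : ℝ) :
    lineDeriv ℝ f (x + s • v) v = deriv (fun τ => f (x + τ • v)) s := by
  simpa [lineDeriv, add_smul, add_assoc] using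
    deriv_comp_const_add (fun τ => f (x + τ • v)) s 0

lemma foldr_comp_eq_id {β : Type*} {l : List (β → β)} (h : ∀ f ∈ l, f = id) :
    l.foldr (· ∘ ·) id = id := by
  induction l with
  | nil => rfl
  | cons f t ih =>
    rw [List.foldr_cons, h f List.mem_cons_self, ih fun g hg => h g (List.mem_cons_of_mem _ hg)]
    rfl

lemma foldr_comp_ofFn_eq_of_forall_ne {β : Type*} {k : ℕ} (g : Fin k → β → β) (i : Fin k)
    (h : ∀ j ≠ i, g j = id) : (List.ofFn g).foldr (· ∘ ·) id = g i := by
  induction k with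
  | zero => exact i.elim0
  | succ k ih =>
    rw [List.ofFn_succ, List.foldr_cons]
    rcases Fin.eq_zero_or_eq_succ i with rfl | ⟨j, rfl⟩
    · rw [foldr_comp_eq_id fun f hf => ?_]
      · rfl
      obtain ⟨j, rfl⟩ := List.mem_ofFn.1 hf
      exact h _ (Fin.succ_ne_zero j)
    · rw [h 0 (Fin.succ_ne_zero j).symm, ih _ j fun l hl => h _ (Fin.succ_injective _ |>.ne hl)]
      rfl

lemma multiD_zero (u : E n m → ℝ) : multiD (n := n) (m := m) 0 0 0 u = u := by
  simp [multiD, foldr_comp_eq_id]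

lemma multiD_single (i : Fin n) (u : E n m → ℝ) :
    multiD 0 (Pi.single i 1) 0 u = dl (eX n m i) u := by
  rw [multiD, foldr_comp_ofFn_eq_of_forall_ne _ i fun j hj => by simp [Pi.single_eq_of_ne hj]]
  simp [foldr_comp_eq_id]

section Norms

variable {a : ℝ} {J : Set ℝ} {D : Set (Z n m)} {u : E n m → ℝ}

lemma holderN_dl_eX_le_CkN_one (i : Fin n) :
    holderN a J D (dl (eX n m i) u) ≤ CkN 1 a J D u := by
  simpa [CkN, multiDP, multiD_single] using
    ENNReal.le_tsum (f := fun p : Idx n m 1 => holderN a J D (multiDP p.1 u))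
      ⟨(0, Pi.single i 1, 0), by simp [MIdx.wt, Finset.sum_pi_single']⟩

lemma CkN_one_le_pieceN (I : Finset (Fin n)) : CkN 1 a J D u ≤ pieceN I a J D u := by
  unfold pieceN
  iterate 7 apply le_add_right
  exact le_rfl

lemma pieceN_le_C2N (I : Finset (Fin n)) :
    pieceN I a J (D ∩ closure (MI n m I)) u ≤ C2N a J D u :=
  Finset.single_le_sum (f := fun I => pieceN I a J (D ∩ closure (MI n m I)) u)
    (fun _ _ => zero_le) (Finset.mem_univ I)

lemma C2N_le_Ck2N_zero : C2N a J D u ≤ Ck2N 0 a J D u := by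
  simpa [Ck2N, multiDP, multiD_zero] using
    ENNReal.le_tsum (f := fun p : Idx n m 0 => C2N a J D (multiDP p.1 u))
      ⟨(0, 0, 0), by simp [MIdx.wt]⟩

lemma holderSemi_dl_eX_le_Ck2N_zero (I : Finset (Fin n)) (i : Fin n) :
    holderSemi a J (D ∩ closure (MI n m I)) (dl (eX n m i) u) ≤ Ck2N 0 a J D u :=
  calc holderSemi a J (D ∩ closure (MI n m I)) (dl (eX n m i) u)
      ≤ holderN a J (D ∩ closure (MI n m I)) (dl (eX n m i) u) := le_add_self
    _ ≤ CkN 1 a J (D ∩ closure (MI n m I)) u := holderN_dl_eX_le_CkN_one i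
    _ ≤ pieceN I a J (D ∩ closure (MI n m I)) u := CkN_one_le_pieceN I
    _ ≤ C2N a J D u := pieceN_le_C2N I
    _ ≤ Ck2N 0 a J D u := C2N_le_Ck2N_zero

lemma abs_le_toReal_supN (hu : supN J D u ≠ ⊤) {P : E n m} (hP : P ∈ QT J D) :
    |u P| ≤ (supN J D u).toReal := by
  simpa using ENNReal.toReal_mono hu (le_iSup₂_of_le P hP le_rfl : ENNReal.ofReal |u P| ≤ _)

lemma abs_sub_le_toReal_holderSemi_mul (hu : holderSemi a J D u ≠ ⊤) {P Q : E n m}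
    (hP : P ∈ QT J D) (hQ : Q ∈ QT J D) (hPQ : 0 < rho P Q) :
    |u P - u Q| ≤ (holderSemi a J D u).toReal * rho P Q ^ a := by
  have hne : P ≠ Q := by
    rintro rfl
    simp [rho, rho0] at hPQ
  have hquot : |u P - u Q| / rho P Q ^ a ≤ (holderSemi a J D u).toReal := by
    have hle : ENNReal.ofReal (|u P - u Q| / rho P Q ^ a) ≤ holderSemi a J D u :=
      le_iSup₂_of_le P hP <| le_iSup₂_of_le Q hQ <|
        le_iSup (fun _ : P ≠ Q => ENNReal.ofReal (|u P - u Q| / rho P Q ^ a)) hne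
    simpa [Real.rpow_nonneg hPQ.le, div_nonneg] using ENNReal.toReal_mono hu hle
  rwa [div_le_iff₀ (Real.rpow_pos_of_pos hPQ a)] at hquot

end Norms

/-- `deriv` is junk `0` where `φ` is not differentiable: if `w = deriv φ` vanishes nowhere,
`φ` is differentiable on `[c, d]` and the mean value theorem applies. -/
lemma abs_le_of_eq_deriv_of_abs_sub_le {φ w : ℝ → ℝ} {c d M B : ℝ} (hcd : c < d)
    (h0 : (0 : ℝ) ∈ Icc c d) (hw : ∀ s ∈ Icc c d, w s = deriv φ s)
    (hφ : ∀ s ∈ Icc c d, |φ s| ≤ M) (hosc : ∀ s ∈ Icc c d, |w 0 - w s| ≤ B) :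
    |w 0| ≤ B + 2 * M / (d - c) := by
  have hdc : 0 < d - c := sub_pos.2 hcd
  have hslope_nonneg : 0 ≤ 2 * M / (d - c) := by
    have := (abs_nonneg _).trans (hφ 0 h0)
    positivity
  by_cases hzero : ∃ s ∈ Icc c d, w s = 0
  · obtain ⟨s, hs, hws⟩ := hzero
    have := hosc s hs
    rw [hws, sub_zero] at this
    linarith
  push Not at hzero
  have hdiff : ∀ s ∈ Icc c d, DifferentiableAt ℝ φ s := fun s hs =>
    differentiableAt_of_deriv_ne_zero (hw s hs ▸ hzero s hs)
  obtain ⟨ξ, hξ, hslope⟩ := exists_deriv_eq_slope φ hcd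
    (fun s hs => (hdiff s hs).continuousAt.continuousWithinAt)
    (fun s hs => (hdiff s (Ioo_subset_Icc_self hs)).differentiableWithinAt)
  have hwξ : |w ξ| ≤ 2 * M / (d - c) := by
    rw [hw ξ (Ioo_subset_Icc_self hξ), hslope, abs_div, abs_of_pos hdc]
    gcongr
    linarith [abs_sub (φ d) (φ c), hφ d (right_mem_Icc.2 hcd.le), hφ c (left_mem_Icc.2 hcd.le)]
  linarith [abs_sub_abs_le_abs_sub (w 0) (w ξ), hosc ξ (Ioo_subset_Icc_self hξ)]

lemma abs_dl_eX_sub_le {a h s : ℝ} {J : Set ℝ} {u : E n m → ℝ} (ha : 0 ≤ a)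
    (hu : Ck2N 0 a J (Sbar n m) u ≠ ⊤) (hh : h ≤ 1) (i : Fin n) {P : E n m}
    (hP : P ∈ QT J (Sbar n m)) (hs : |s| ≤ h) (hside : SameSide (P.2.1 i) (P.2.1 i + s)) :
    |dl (eX n m i) u P - dl (eX n m i) u (P + s • eX n m i)| ≤
      (Ck2N 0 a J (Sbar n m) u).toReal * (2 * √h) ^ a := by
  rcases eq_or_ne s 0 with rfl | hs0
  · simp only [zero_smul, add_zero, sub_self, abs_zero]
    positivity
  set D := Sbar n m ∩ closure (MI n m (Finset.univ.filter fun k => P.2.1 k ≤ 1))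
  have hsemi : holderSemi a J D (dl (eX n m i) u) ≤ Ck2N 0 a J (Sbar n m) u :=
    holderSemi_dl_eX_le_Ck2N_zero _ i
  have hPD : P ∈ QT J D := by
    simpa using add_smul_eX_mem hP (i := i) (s := 0) (by simpa using sameSide_self (hP.2 i))
  have hρ := rho_add_smul_eX P i s
  have hρpos : 0 < rho P (P + s • eX n m i) := by
    rw [hρ, abs_pos, sub_ne_zero]
    exact strictMonoOn_Fwf.injOn.ne (hP.2 i) hside.nonneg (by simpa using hs0)
  have hρle : rho P (P + s • eX n m i) ≤ 2 * √h := by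
    rw [hρ]
    exact abs_Fwf_sub_le (hP.2 i) hside hh (by rwa [sub_add_cancel_left, abs_neg])
  calc |dl (eX n m i) u P - dl (eX n m i) u (P + s • eX n m i)|
      ≤ (holderSemi a J D (dl (eX n m i) u)).toReal * rho P (P + s • eX n m i) ^ a :=
        abs_sub_le_toReal_holderSemi_mul (ne_top_of_le_ne_top hu hsemi) hPD
          (add_smul_eX_mem hP hside) hρpos
    _ ≤ (Ck2N 0 a J (Sbar n m) u).toReal * (2 * √h) ^ a := by
        gcongr

lemma abs_dl_eX_le {a h : ℝ} {J : Set ℝ} {u : E n m → ℝ} (ha : 0 ≤ a)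
    (hu : Ck2N 0 a J (Sbar n m) u ≠ ⊤) (hsup : supN J (Sbar n m) u ≠ ⊤)
    (hh0 : 0 < h) (hh : h ≤ 1 / 2) (i : Fin n) {P : E n m} (hP : P ∈ QT J (Sbar n m)) :
    |dl (eX n m i) u P| ≤
      (Ck2N 0 a J (Sbar n m) u).toReal * (2 * √h) ^ a
        + 2 * (supN J (Sbar n m) u).toReal / h := by
  obtain ⟨c, hc, hside⟩ := exists_Icc_sameSide (hP.2 i) hh0.le hh
  have hs_abs : ∀ s ∈ Icc c (c + h), |s| ≤ h := fun s hs =>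
    abs_le.2 ⟨by linarith [hs.1, hc.1], by linarith [hs.2, hc.2]⟩
  have hbound := abs_le_of_eq_deriv_of_abs_sub_le (φ := fun s => u (P + s • eX n m i))
    (w := fun s => dl (eX n m i) u (P + s • eX n m i))
    (by linarith : c < c + h) ⟨hc.2, by linarith [hc.1]⟩
    (fun s _ => lineDeriv_add_smul u P (eX n m i) s)
    (fun s hs => abs_le_toReal_supN hsup <| by
      obtain ⟨ht, hz, -⟩ := add_smul_eX_mem hP (hside s hs)
      exact ⟨ht, hz⟩)
    (fun s hs => by simpa only [zero_smul, add_zero] using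
      abs_dl_eX_sub_le ha hu (by linarith) i hP (hs_abs s hs) (hside s hs))
  simpa using hbound

lemma ofReal_le_mul_add_mul {x ε C : ℝ} {S M : ℝ≥0∞} (hε : 0 ≤ ε) (hC : 0 ≤ C)
    (hS : S ≠ ⊤) (hM : M ≠ ⊤) (hx : x ≤ ε * S.toReal + C * M.toReal) :
    ENNReal.ofReal x ≤ ENNReal.ofReal ε * S + ENNReal.ofReal C * M := by
  calc ENNReal.ofReal x ≤ ENNReal.ofReal (ε * S.toReal + C * M.toReal) :=
        ENNReal.ofReal_le_ofReal hx
    _ = ENNReal.ofReal ε * S + ENNReal.ofReal C * M := by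
      rw [ENNReal.ofReal_add (by positivity) (by positivity), ENNReal.ofReal_mul hε,
        ENNReal.ofReal_mul hC, ENNReal.ofReal_toReal hS, ENNReal.ofReal_toReal hM]

theorem statement5_general (n m : ℕ) (T : ℝ)
    (a : ℝ) (ha : a ∈ Set.Ioo (0:ℝ) 1) :
    ∃ C > (0:ℝ), ∃ m₀ > (0:ℝ), ∀ u : E n m → ℝ,
      MemCk2 0 a (Set.Icc 0 T) (Sbar n m) u → ∀ ε ∈ Set.Ioo (0:ℝ) 1, ∀ i : Fin n,
        supN (Set.Icc 0 T) (Sbar n m) (dl (eX n m i) u) ≤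
          ENNReal.ofReal ε * Ck2N 0 a (Set.Icc 0 T) (Sbar n m) u
            + ENNReal.ofReal (C * ε ^ (-m₀)) * supN (Set.Icc 0 T) (Sbar n m) u := by
  refine ⟨8, by norm_num, 2 / a, div_pos two_pos ha.1, fun u hu ε ⟨hε0, hε1⟩ i => ?_⟩
  by_cases hsup : supN (Icc 0 T) (Sbar n m) u = ⊤
  · rw [hsup, ENNReal.mul_top (ENNReal.ofReal_pos.2 (by positivity)).ne', add_top]
    exact le_top
  set r := ε ^ a⁻¹
  have hr0 : 0 < r := Real.rpow_pos_of_pos hε0 _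
  have hr1 : r ≤ 1 := Real.rpow_le_one hε0.le hε1.le (inv_nonneg.2 ha.1.le)
  have hsqrt : 2 * √(r ^ 2 / 4) = r := by
    rw [show r ^ 2 / 4 = (r / 2) ^ 2 by ring, Real.sqrt_sq (by positivity)]
    ring
  have hpow : ε ^ (-(2 / a)) = (r ^ 2)⁻¹ := by
    rw [Real.rpow_neg hε0.le, div_eq_mul_inv, mul_comm, ← Nat.cast_two,
      Real.rpow_mul_natCast hε0.le]
  refine iSup₂_le fun P hP => ofReal_le_mul_add_mul hε0.le (by positivity) hu.1 hsup ?_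
  have hbound := abs_dl_eX_le (h := r ^ 2 / 4) ha.1.le hu.1 hsup (by positivity) (by nlinarith) i hP
  rw [hsqrt, Real.rpow_inv_rpow hε0.le ha.1.ne'] at hbound
  rw [hpow]
  convert hbound using 2
  · ring
  · field_simp
    ring

/-- Interpolation inequality (2.5): sup norm of `u_{x_i}`. -/
theorem statement5 (n m : ℕ) (hnm : 1 ≤ n + m) (T : ℝ) (hT : 0 < T)
    (a : ℝ) (ha : a ∈ Set.Ioo (0:ℝ) 1) :
    ∃ C > (0:ℝ), ∃ m₀ > (0:ℝ), ∀ u : E n m → ℝ,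
      MemCk2 0 a (Set.Icc 0 T) (Sbar n m) u → ∀ ε ∈ Set.Ioo (0:ℝ) 1, ∀ i : Fin n,
        supN (Set.Icc 0 T) (Sbar n m) (dl (eX n m i) u) ≤
          ENNReal.ofReal ε * Ck2N 0 a (Set.Icc 0 T) (Sbar n m) u
            + ENNReal.ofReal (C * ε ^ (-m₀)) * supN (Set.Icc 0 T) (Sbar n m) u :=
  statement5_general n m T a ha

end Kimura
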